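/- arXiv:math/0404048 — 3 statements merged into one kernel-verified Lean document; each statement's English description precedes it below -/
import Mathlib

section
/- Let $a_1,\ldots,a_{k+1}$ be positive reals and let $e_1,\ldots,e_k$ be the edges of a tree on vertex set $\{1,\ldots,k+1\}$. Define a $k\times k$ matrix $M$ by: $M(i,i) = a_r + a_s$ if $e_i$ joins vertices $r$ and $s$; $M(i,j) = a_r$ if $i \neq j$ and $e_i, e_j$ are distinct edges meeting at vertex $r$; and $M(i,j) = 0$ if $e_i$ and $e_j$ share no vertex. Then $\det M = \left(\prod_{i=1}^{k+1} a_i\right)\left(\sum_{i=1}^{k+1} a_i^{-1}\right)$. -/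
/-!
The matrix is `N * diagonal a * Nᵀ`, where `N` is the edge–vertex incidence matrix of the
tree, and its determinant is `∑ w, ∏ v ≠ w, a v`. This goes by induction on the number of
edges. For a leaf `u` on the edge `t = {u, p}`, linearity in row `t` splits off `a u` times the
determinant of the tree without `u`; in the remaining matrix (weight `0` at `u`) row `t` is
`a p` times column `p` of `Nᵀ`, so subtracting multiples of it clears column `t` and leaves
`a p` times the determinant of the smaller tree with weight `0` at `p`. Dividing each term by
`∏ v, a v` gives the theorem.
-/

open Finset Matrix Function

namespace Matrix

variable {n R : Type*} [Fintype n] [DecidableEq n] [CommRing R]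

abbrev submatrixNe {α : Type*} (M : Matrix n n α) (t : n) :
    Matrix {i // i ≠ t} {i // i ≠ t} α :=
  M.submatrix (↑) (↑)

theorem det_eq_mul_det_submatrixNe_of_row (M : Matrix n n R) (t : n) (h : ∀ j ≠ t, M t j = 0) :
    M.det = M t t * (M.submatrixNe t).det := by
  have : Subsingleton {i // ¬i ≠ t} :=
    ⟨fun x y => Subtype.ext <| (not_not.1 x.2).trans (not_not.1 y.2).symm⟩
  rw [M.twoBlockTriangular_det (· ≠ t) fun i hi j hj => not_not.1 hi ▸ h j hj, mul_comm,
    det_eq_elem_of_subsingleton _ ⟨t, not_not.2 rfl⟩]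
  rfl

theorem det_eq_mul_det_submatrixNe_of_col (M : Matrix n n R) (t : n) (h : ∀ i ≠ t, M i t = 0) :
    M.det = M t t * (M.submatrixNe t).det := by
  rw [← det_transpose, det_eq_mul_det_submatrixNe_of_row Mᵀ t h,
    ← det_transpose (M.submatrixNe t)]
  rfl

variable {ι V : Type*} [Fintype V] [DecidableEq V]

theorem mul_diagonal_mul_transpose_apply (N : Matrix ι V R) (a : V → R) (i j : ι) :
    (N * diagonal a * Nᵀ) i j = ∑ v, N i v * a v * N j v := by
  rw [mul_apply]
  simp only [mul_diagonal, transpose_apply]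

theorem mul_diagonal_update_mul_transpose (N : Matrix ι V R) (a : V → R) (v : V) (x : R) :
    N * diagonal (update a v x) * Nᵀ =
      N * diagonal a * Nᵀ + (x - a v) • vecMulVec (Nᵀ v) (Nᵀ v) := by
  ext i j
  simp only [mul_diagonal_mul_transpose_apply, add_apply, smul_apply, vecMulVec_apply,
    transpose_apply, smul_eq_mul]
  rw [Fintype.sum_eq_add_sum_subtype_ne _ v, Fintype.sum_eq_add_sum_subtype_ne _ v, update_self,
    sum_congr rfl fun w _ => by rw [update_of_ne w.2]]
  ring

theorem mul_diagonal_mul_transpose_apply_of_row {N : Matrix ι V R} {t : ι} {u p : V}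
    (hrow : N t = Pi.single u 1 + Pi.single p 1) (a : V → R) (j : ι) :
    (N * diagonal a * Nᵀ) t j = a u * N j u + a p * N j p := by
  simp [mul_diagonal_mul_transpose_apply, hrow, add_mul, sum_add_distrib, Pi.single_apply]

section Leaf

variable [DecidableEq ι] {N : Matrix ι V R} {t : ι} {u p : V}

theorem submatrixNe_mul_diagonal_mul_transpose (hcol : Nᵀ u = Pi.single t 1) (a : V → R) :
    (N * diagonal a * Nᵀ).submatrixNe t =
      N.submatrix ((↑) : {i // i ≠ t} → ι) ((↑) : {v // v ≠ u} → V) *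
        diagonal (fun v : {v // v ≠ u} => a v) *
        (N.submatrix ((↑) : {i // i ≠ t} → ι) ((↑) : {v // v ≠ u} → V))ᵀ := by
  ext i j
  have hiu : N i u = 0 := by simpa [i.2] using congrFun hcol i
  rw [submatrixNe, submatrix_apply, mul_diagonal_mul_transpose_apply,
    Fintype.sum_eq_add_sum_subtype_ne _ u, hiu, zero_mul, zero_mul, zero_add]
  exact (mul_diagonal_mul_transpose_apply (N.submatrix (↑) (↑))
    (fun v : {v // v ≠ u} => a v) i j).symm

variable [Fintype ι]

theorem det_mul_diagonal_mul_transpose_eq_add (hcol : Nᵀ u = Pi.single t 1) (a : V → R) :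
    (N * diagonal a * Nᵀ).det =
      a u * ((N * diagonal a * Nᵀ).submatrixNe t).det +
        (N * diagonal (update a u 0) * Nᵀ).det := by
  set B := N * diagonal (update a u 0) * Nᵀ
  have hA : N * diagonal a * Nᵀ = B.updateRow t (B t + Pi.single t (a u)) := by
    rw [show a = update (update a u 0) u (a u) by simp, mul_diagonal_update_mul_transpose, hcol]
    ext i j
    by_cases hi : i = t
    · subst hi
      simp [B, vecMulVec_apply, Pi.single_apply]
    · simp [B, vecMulVec_apply, hi]
  have hminor : ∀ r, (B.updateRow t r).submatrixNe t = B.submatrixNe t := fun r => by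
    ext i j
    simp [updateRow_ne i.2]
  rw [hA, det_updateRow_add, updateRow_eq_self, hminor, add_comm,
    det_eq_mul_det_submatrixNe_of_row _ t fun j hj => by simp [hj], hminor]
  simp

theorem det_mul_diagonal_mul_transpose_of_eq_zero (hup : u ≠ p)
    (hrow : N t = Pi.single u 1 + Pi.single p 1) {a : V → R} (hu : a u = 0) :
    (N * diagonal a * Nᵀ).det =
      a p * ((N * diagonal (update a p 0) * Nᵀ).submatrixNe t).det := by
  set B := N * diagonal a * Nᵀ
  have htp : N t p = 1 := by simp [hrow, hup.symm]
  have hB_row : ∀ j, B t j = a p * N j p := fun j => by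
    simp [B, mul_diagonal_mul_transpose_apply_of_row hrow, hu]
  have hB_symm : ∀ i j, B i j = B j i := fun i j => by
    simp only [B, mul_diagonal_mul_transpose_apply]
    exact sum_congr rfl fun v _ => by ring
  let c : ι → R := fun i => if i = t then 0 else N i p
  let B' : Matrix ι ι R := of fun i j => B i j - c i * B t j
  have hB' : B.det = B'.det :=
    det_eq_of_forall_row_eq_smul_add_const c t (by simp [c]) fun i j => by simp [B', c]
  have hcolt : ∀ i ≠ t, B' i t = 0 := fun i hi => by
    simp [B', c, hi, hB_row, htp, hB_symm i t, mul_comm]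
  have hminor : B'.submatrixNe t = (N * diagonal (update a p 0) * Nᵀ).submatrixNe t := by
    ext i j
    simp only [submatrix_apply, of_apply, B', c, if_neg i.2, hB_row,
      mul_diagonal_update_mul_transpose, add_apply, smul_apply, vecMulVec_apply, transpose_apply]
    ring
  rw [hB', det_eq_mul_det_submatrixNe_of_col B' t hcolt, hminor]
  simp [B', c, hB_row, htp]

end Leaf

end Matrix

section ProdUpdate

variable {α M : Type*} [Fintype α] [DecidableEq α]

theorem mul_prod_update_one [CommMonoid M] (f : α → M) (a : α) :
    f a * ∏ v, update f a 1 v = ∏ v, f v := by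
  rw [Fintype.prod_eq_mul_prod_subtype_ne _ a, Fintype.prod_eq_mul_prod_subtype_ne f a,
    update_self, one_mul]
  exact congrArg _ (prod_congr rfl fun v _ => update_of_ne v.2 _ _)

variable [CommSemiring M]

theorem sum_prod_update_one_of_eq_zero {f : α → M} {a : α} (ha : f a = 0) :
    ∑ w, ∏ v, update f w 1 v = ∏ v, update f a 1 v :=
  Fintype.sum_eq_single a fun w hw => prod_eq_zero (mem_univ a) (by rw [update_of_ne hw.symm, ha])

theorem sum_prod_update_one_eq_add (f : α → M) (u : α) :
    ∑ w, ∏ v, update f w 1 v = ∏ v : {v // v ≠ u}, f v +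
      f u * ∑ w : {v // v ≠ u}, ∏ v, update (fun v : {v // v ≠ u} => f v) w 1 v := by
  rw [Fintype.sum_eq_add_sum_subtype_ne _ u, mul_sum, Fintype.prod_eq_mul_prod_subtype_ne _ u,
    update_self, one_mul]
  congr 1
  · exact prod_congr rfl fun v _ => update_of_ne v.2 _ _
  · refine sum_congr rfl fun w _ => ?_
    rw [Fintype.prod_eq_mul_prod_subtype_ne _ u, update_of_ne w.2.symm]
    exact congrArg _ (prod_congr rfl fun v _ => by simp [update_apply, Subtype.ext_iff])

end ProdUpdate

variable {ι V : Type*}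

def IsLeafEdge (e : ι → V × V) (u : V) (t : ι) : Prop :=
  ∀ i, u = (e i).1 ∨ u = (e i).2 ↔ i = t

def removeLeaf {e : ι → V × V} {u : V} {t : ι} (hleaf : IsLeafEdge e u t)
    (i : {i // i ≠ t}) : {v // v ≠ u} × {v // v ≠ u} :=
  (⟨(e i).1, fun h => i.2 ((hleaf i).1 (Or.inl h.symm))⟩,
    ⟨(e i).2, fun h => i.2 ((hleaf i).1 (Or.inr h.symm))⟩)

section IncMatrix

variable (R : Type*) [CommRing R] [DecidableEq V] {e : ι → V × V}

def incMatrix (e : ι → V × V) : Matrix ι V R :=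
  of fun i v => if v = (e i).1 ∨ v = (e i).2 then 1 else 0

theorem incMatrix_removeLeaf {u : V} {t : ι} (hleaf : IsLeafEdge e u t) :
    incMatrix R (removeLeaf hleaf) = (incMatrix R e).submatrix (↑) (↑) := by
  ext i v
  simp [incMatrix, removeLeaf, Subtype.ext_iff]

theorem incMatrix_eq_single_add_single {t : ι} (ht : (e t).1 ≠ (e t).2) :
    incMatrix R e t = Pi.single (e t).1 1 + Pi.single (e t).2 1 := by
  ext v
  by_cases h1 : v = (e t).1
  · simp [incMatrix, h1, ht]
  · by_cases h2 : v = (e t).2 <;> simp [incMatrix, h1, h2, ht.symm]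

theorem transpose_incMatrix_of_isLeafEdge [DecidableEq ι] {u : V} {t : ι}
    (hleaf : IsLeafEdge e u t) :
    (incMatrix R e)ᵀ u = Pi.single t 1 := by
  ext i
  simp [incMatrix, Pi.single_apply, hleaf i]

variable {R}

theorem eq_incMatrix_mul_diagonal_mul_transpose [Fintype V]
    (hloop : ∀ i, (e i).1 ≠ (e i).2) (hinj : Injective fun i => s((e i).1, (e i).2))
    {a : V → R} {M : Matrix ι ι R} (hdiag : ∀ i, M i i = a (e i).1 + a (e i).2)
    (hmeet : ∀ i j, i ≠ j → ∀ v,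
      (v = (e i).1 ∨ v = (e i).2) → (v = (e j).1 ∨ v = (e j).2) → M i j = a v)
    (hdisj : ∀ i j, i ≠ j →
      (∀ v, ¬((v = (e i).1 ∨ v = (e i).2) ∧ (v = (e j).1 ∨ v = (e j).2))) → M i j = 0) :
    M = incMatrix R e * diagonal a * (incMatrix R e)ᵀ := by
  ext i j
  rw [mul_diagonal_mul_transpose_apply_of_row (incMatrix_eq_single_add_single R (hloop i))]
  simp only [incMatrix, of_apply]
  by_cases hij : i = j
  · subst hij
    simp [hdiag]
  by_cases h1 : (e i).1 = (e j).1 ∨ (e i).1 = (e j).2 <;>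
    by_cases h2 : (e i).2 = (e j).1 ∨ (e i).2 = (e j).2
  · exact absurd (hinj (Sym2.eq_of_ne_mem (hloop i) (Sym2.mem_mk_left _ _)
      (Sym2.mem_mk_right _ _) (Sym2.mem_iff.2 h1) (Sym2.mem_iff.2 h2))) hij
  · simp [h1, h2, hmeet i j hij _ (.inl rfl) h1]
  · simp [h1, h2, hmeet i j hij _ (.inr rfl) h2]
  · rw [hdisj i j hij fun v ⟨hv, hvj⟩ => by rcases hv with rfl | rfl <;> contradiction]
    simp [h1, h2]

end IncMatrix

variable [Fintype ι] [Fintype V] [DecidableEq V]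

structure IsSpanningTree (e : ι → V × V) : Prop where
  loopless : ∀ i, (e i).1 ≠ (e i).2
  reachable : ∀ x y, Relation.ReflTransGen (fun x y => ∃ i, e i = (x, y) ∨ e i = (y, x)) x y
  card_eq : Fintype.card V = Fintype.card ι + 1

namespace IsSpanningTree

variable {e : ι → V × V}

theorem exists_isLeafEdge [Nonempty ι] (h : IsSpanningTree e) : ∃ u t, IsLeafEdge e u t := by
  let r : V → ι → Prop := fun v i => v = (e i).1 ∨ v = (e i).2
  -- the degrees sum to `2 * card ι < 2 * card V`
  obtain ⟨u, hu⟩ : ∃ u, #(univ.bipartiteAbove r u) < 2 := by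
    by_contra! hdeg
    have hcount := card_nsmul_le_card_nsmul (s := univ) (t := univ) r (m := 2) (n := 2)
      (fun v _ => hdeg v) fun i _ =>
        (card_le_card (t := {(e i).1, (e i).2}) fun v => by simp [r]).trans card_le_two
    simp only [card_univ, h.card_eq, smul_eq_mul] at hcount
    omega
  have : Nontrivial V :=
    Fintype.one_lt_card_iff_nontrivial.1 (by simp [h.card_eq, Fintype.card_pos])
  obtain ⟨w, hw⟩ := exists_ne u
  obtain ⟨t, ht⟩ : ∃ t, r u t := by
    rcases (h.reachable u w).cases_head with huw | ⟨c, ⟨i, hi⟩, -⟩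
    · exact absurd huw.symm hw
    · exact ⟨i, by rcases hi with hi | hi <;> simp [r, hi]⟩
  obtain ⟨t', ht'⟩ := card_eq_one.1 <|
    le_antisymm (Nat.le_of_lt_succ hu) (card_pos.2 ⟨t, by simp [ht]⟩)
  exact ⟨u, t', fun i => by simpa [r] using congrArg (i ∈ ·) ht'⟩

theorem removeLeaf [DecidableEq ι] (h : IsSpanningTree e) {u : V} {t : ι}
    (hleaf : IsLeafEdge e u t) : IsSpanningTree (_root_.removeLeaf hleaf) where
  loopless i heq := h.loopless i (congrArg Subtype.val heq)
  card_eq := by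
    have := Fintype.card_pos_iff.2 ⟨t⟩
    simp [Fintype.card_subtype_compl, h.card_eq]
    omega
  reachable := by
    -- retract the leaf `u` onto its neighbour `p`
    have hut := (hleaf t).2 rfl
    let p := if u = (e t).1 then (e t).2 else (e t).1
    have hpu : p ≠ u := by
      have := h.loopless t
      by_cases h1 : u = (e t).1 <;> simp only [p, h1, if_true, if_false] <;> grind
    let f : V → {v // v ≠ u} := fun v => if hv : v = u then ⟨p, hpu⟩ else ⟨v, hv⟩
    have hft : f (e t).1 = f (e t).2 := by
      have := h.loopless t
      rcases hut with h1 | h1 <;> apply Subtype.ext <;> simp [f, p, h1] <;> grind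
    have hf : ∀ x y i, e i = (x, y) ∨ e i = (y, x) → Relation.ReflTransGen
        (fun x y => ∃ i, _root_.removeLeaf hleaf i = (x, y) ∨
          _root_.removeLeaf hleaf i = (y, x)) (f x) (f y) := by
      intro x y i hi
      by_cases hit : i = t
      · subst hit
        rcases hi with hi | hi <;> simp only [hi] at hft <;> rw [hft]
      · have h1 : (e i).1 ≠ u := fun h1 => hit ((hleaf i).1 (Or.inl h1.symm))
        have h2 : (e i).2 ≠ u := fun h2 => hit ((hleaf i).1 (Or.inr h2.symm))
        refine .single ⟨⟨i, hit⟩, ?_⟩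
        rcases hi with hi | hi <;> simp_all [f, _root_.removeLeaf]
    intro x y
    simpa [Function.onFun, f, x.2, y.2] using
      (h.reachable x y).lift' f fun a b ⟨i, hi⟩ => hf a b i hi

end IsSpanningTree

variable [DecidableEq ι]

theorem det_incMatrix_mul_diagonal_mul_transpose {R : Type*} [CommRing R] {e : ι → V × V}
    (h : IsSpanningTree e) (a : V → R) :
    (incMatrix R e * diagonal a * (incMatrix R e)ᵀ).det = ∑ w, ∏ v, update a w 1 v := by
  induction hn : Fintype.card ι generalizing ι V with
  | zero =>
    have : IsEmpty ι := Fintype.card_eq_zero_iff.1 hn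
    obtain ⟨w, hw⟩ := Fintype.card_eq_one_iff.1 (h.card_eq.trans (by rw [hn]))
    simp [Fintype.sum_eq_single w fun v hv => absurd (hw v) hv, hw]
  | succ n ih =>
    have : Nonempty ι := Fintype.card_pos_iff.1 (by omega)
    obtain ⟨u, t, hleaf⟩ := h.exists_isLeafEdge
    obtain ⟨p, hup, hrow⟩ :
        ∃ p, u ≠ p ∧ incMatrix R e t = Pi.single u 1 + Pi.single p 1 := by
      rw [incMatrix_eq_single_add_single R (h.loopless t)]
      rcases (hleaf t).2 rfl with hu | hu
      · exact ⟨_, hu ▸ h.loopless t, by rw [hu]⟩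
      · exact ⟨_, hu ▸ (h.loopless t).symm, by rw [hu, add_comm]⟩
    have hcol := transpose_incMatrix_of_isLeafEdge R hleaf
    have hsub : ∀ b : V → R, (incMatrix R e * diagonal b * (incMatrix R e)ᵀ).submatrixNe t =
        incMatrix R (removeLeaf hleaf) * diagonal (fun v : {v // v ≠ u} => b v) *
          (incMatrix R (removeLeaf hleaf))ᵀ := fun b => by
      rw [submatrixNe_mul_diagonal_mul_transpose hcol, incMatrix_removeLeaf]
    have ih' := fun b => ih (h.removeLeaf hleaf) b (by simp [Fintype.card_subtype_compl, hn])
    rw [det_mul_diagonal_mul_transpose_eq_add hcol,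
      det_mul_diagonal_mul_transpose_of_eq_zero hup hrow (update_self u 0 a), hsub, hsub, ih', ih',
      sum_prod_update_one_of_eq_zero (f := fun v : {v // v ≠ u} => update (update a u 0) p 0 v)
        (a := ⟨p, hup.symm⟩) (by simp),
      sum_prod_update_one_eq_add a u, add_comm, update_of_ne hup.symm]
    congr 1
    rw [← mul_prod_update_one (fun v : {v // v ≠ u} => a v) ⟨p, hup.symm⟩]
    refine congrArg _ (prod_congr rfl fun v _ => ?_)
    by_cases hv : (v : V) = p <;> simp [hv, update_apply, Subtype.ext_iff, v.2]

/-- Parallel edges would make two rows of `incMatrix` equal, while the determinant formula at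
`a = 1` gives `card V ≠ 0`. -/
theorem IsSpanningTree.injective {e : ι → V × V} (h : IsSpanningTree e) :
    Injective fun i => s((e i).1, (e i).2) := by
  intro i j hij
  by_contra hne
  have hrow : incMatrix ℚ e i = incMatrix ℚ e j := by
    ext v
    simp only [incMatrix, of_apply, ← Sym2.mem_iff]
    rw [show s((e i).1, (e i).2) = s((e j).1, (e j).2) from hij]
  have h0 : (incMatrix ℚ e * diagonal (fun _ : V => (1 : ℚ)) * (incMatrix ℚ e)ᵀ).det = 0 :=
    det_zero_of_row_eq hne <| by
      ext l
      simp only [mul_diagonal_mul_transpose_apply, hrow]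
  rw [det_incMatrix_mul_diagonal_mul_transpose h] at h0
  simp [h.card_eq] at h0
  exact absurd h0 (by positivity)

theorem det_tree_matrix_general (k : ℕ) (a : Fin (k + 1) → ℝ) (ha : ∀ v, 0 < a v)
    (e : Fin k → Fin (k + 1) × Fin (k + 1))
    (hloop : ∀ i, (e i).1 ≠ (e i).2)
    (hconn : ∀ u v : Fin (k + 1),
      Relation.ReflTransGen (fun x y => ∃ i, e i = (x, y) ∨ e i = (y, x)) u v)
    (M : Matrix (Fin k) (Fin k) ℝ)
    (hdiag : ∀ i, M i i = a (e i).1 + a (e i).2)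
    (hmeet : ∀ i j, i ≠ j → ∀ v : Fin (k + 1),
      (v = (e i).1 ∨ v = (e i).2) → (v = (e j).1 ∨ v = (e j).2) → M i j = a v)
    (hdisj : ∀ i j, i ≠ j →
      (∀ v : Fin (k + 1),
        ¬((v = (e i).1 ∨ v = (e i).2) ∧ (v = (e j).1 ∨ v = (e j).2))) → M i j = 0) :
    M.det = (∏ v, a v) * (∑ v, (a v)⁻¹) := by
  have htree : IsSpanningTree e := ⟨hloop, hconn, by simp⟩
  rw [eq_incMatrix_mul_diagonal_mul_transpose hloop htree.injective hdiag hmeet hdisj,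
    det_incMatrix_mul_diagonal_mul_transpose htree, mul_sum]
  refine sum_congr rfl fun w _ => ?_
  rw [← mul_prod_update_one a w]
  field_simp [(ha w).ne']

/-- **Determinant lemma for tree transfer-impedance-like matrices.**
Let `a 1, …, a (k+1)` be positive reals and `e 1, …, e k` the edges of a tree on
vertex set `Fin (k+1)` (no self-loops, pairwise distinct as unordered pairs,
connecting the vertex set).  If `M` is the `k × k` matrix with
`M i i = a r + a s` when `e i` joins `r` and `s`, `M i j = a r` when the distinct
edges `e i, e j` meet at the vertex `r`, and `M i j = 0` when they share no
vertex, then `det M = (∏ a v) * (∑ (a v)⁻¹)`. -/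
theorem det_tree_matrix (k : ℕ) (a : Fin (k + 1) → ℝ) (ha : ∀ v, 0 < a v)
    (e : Fin k → Fin (k + 1) × Fin (k + 1))
    (hloop : ∀ i, (e i).1 ≠ (e i).2)
    (hinj : Function.Injective fun i => Sym2.mk (e i))
    (hconn : ∀ u v : Fin (k + 1),
      Relation.ReflTransGen (fun x y => ∃ i, e i = (x, y) ∨ e i = (y, x)) u v)
    (M : Matrix (Fin k) (Fin k) ℝ)
    (hdiag : ∀ i, M i i = a (e i).1 + a (e i).2)
    (hmeet : ∀ i j, i ≠ j → ∀ v : Fin (k + 1),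
      (v = (e i).1 ∨ v = (e i).2) → (v = (e j).1 ∨ v = (e j).2) → M i j = a v)
    (hdisj : ∀ i j, i ≠ j →
      (∀ v : Fin (k + 1),
        ¬((v = (e i).1 ∨ v = (e i).2) ∧ (v = (e j).1 ∨ v = (e j).2))) → M i j = 0) :
    M.det = (∏ v, a v) * (∑ v, (a v)⁻¹) :=
  det_tree_matrix_general k a ha e hloop hconn M hdiag hmeet hdisj
end

section
/- Let $U$ be the family tree of a Galton–Watson branching process with Poisson(1) offspring distribution, rooted at its initial vertex, and let $t$ be any finite rooted tree. Then the expected number of tree-maps from $t$ into $U$ equals $1$, i.e. $\mathbb{E}\, N(U;t) = 1$. -/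
/-- Finite rooted (ordered) trees: a tree is a root together with a list of subtrees. -/
inductive RTree : Type
  | node : List RTree → RTree

namespace RTree

/-- The list of subtrees hanging below the root. -/
def children : RTree → List RTree
  | node ts => ts

/-- `ncount u t` is the number of tree-maps from `t` into `u`: injective maps of
vertices sending root to root and children of a vertex to distinct children of its
image.  Equivalently, one chooses an embedding of the root-children of `t` into the
root-children of `u` and, independently, tree-maps of the corresponding subtrees. -/
noncomputable def ncount : RTree → RTree → ℕ
  | node us, node ts =>
    ∑ f : Fin ts.length ↪ Fin us.length,
      ∏ i : Fin ts.length,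
        ncount (us.get (f i)) (ts.get i)
  termination_by u t => sizeOf t
  decreasing_by
    simp only [node.sizeOf_spec]
    exact Nat.lt_add_left 1 (List.sizeOf_lt_of_mem (List.get_mem _ _))

/-- The probability that a Galton–Watson branching process with Poisson(1) offspring
distribution produces exactly the (ordered) tree `t`: each vertex independently has a
Poisson(1) number of children, so a vertex with `c` children contributes `e⁻¹ / c!`. -/
noncomputable def gwProb : RTree → ℝ
  | node ts =>
      (Real.exp (-1) / (Nat.factorial ts.length)) *
        (ts.attach.map fun x => gwProb x.1).prod
  termination_by t => sizeOf t
  decreasing_by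
    have h1 : sizeOf x.1 < sizeOf ts := List.sizeOf_lt_of_mem x.2
    simp only [node.sizeOf_spec]
    omega

end RTree

/-!
Write `U` for the Poisson(1) Galton–Watson tree and `t = node [t₁, …, t_k]`. Conditionally on the
root of `U` having `n` children `U₁, …, U_n` (independent copies of `U`), a tree-map from `t` is an
injection `f : Fin k ↪ Fin n` together with tree-maps `tᵢ → U_{f i}`. Since `f` is injective, the
subtrees `U_{f i}` are independent, so by induction each embedding contributes `∏ᵢ E N(U; tᵢ) = 1`,
and `E N(U; t) = E[n(n-1)⋯(n-k+1)] = 1`, the `k`-th factorial moment of Poisson(1). The subtrees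
`U_j` outside the image of `f` contribute their total mass (formally: `E N(U; node []) = 1`, the
leaf `node []` being sent to them by `Function.extend`), which is `1` because the critical
process dies out: the mass of the trees of height `< h` satisfies `x_{h+1} = exp (x_h - 1)`, whose
iterates from `0` increase to the unique fixed point `1`.
-/

open scoped ENNReal Nat Topology
open Filter

theorem ENNReal.prod_tsum_eq_tsum_prod {α : Type*} :
    ∀ (n : ℕ) (F : Fin n → α → ℝ≥0∞), ∏ j, ∑' a, F j a = ∑' g : Fin n → α, ∏ j, F j (g j)
  | 0, F => by
    simp only [Finset.univ_eq_empty, Finset.prod_empty]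
    rw [tsum_eq_single finZeroElim fun g hg => absurd (Subsingleton.elim g _) hg]
  | n + 1, F => by
    rw [← (Fin.consEquiv fun _ => α).tsum_eq, ENNReal.tsum_prod', Fin.prod_univ_succ,
      ENNReal.prod_tsum_eq_tsum_prod n, ← ENNReal.tsum_mul_right]
    simp only [← ENNReal.tsum_mul_left, Fin.consEquiv_apply, Fin.prod_univ_succ, Fin.cons_zero,
      Fin.cons_succ]

theorem ENNReal.tsum_iSup_eq_iSup_tsum {α : Type*} {f : ℕ → α → ℝ≥0∞}
    (hf : ∀ a, Monotone fun h => f h a) : ∑' a, ⨆ h, f h a = ⨆ h, ∑' a, f h a := by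
  refine le_antisymm ?_ (iSup_le fun h => ENNReal.tsum_le_tsum fun a => le_iSup (f · a) h)
  rw [ENNReal.tsum_eq_iSup_sum]
  refine iSup_le fun s => ?_
  rw [ENNReal.finsetSum_iSup_of_monotone hf]
  exact iSup_mono fun h => ENNReal.sum_le_tsum s

theorem hasSum_descFactorial_mul_pow_div_factorial (k : ℕ) (x : ℝ) :
    HasSum (fun n : ℕ => n.descFactorial k * x ^ n / n !) (x ^ k * Real.exp x) := by
  have hshift : ∀ m : ℕ, ((m + k).descFactorial k * x ^ (m + k) / (m + k)! : ℝ)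
      = x ^ k * (x ^ m / m !) := by
    intro m
    have h := Nat.factorial_mul_descFactorial (Nat.le_add_left k m)
    rw [Nat.add_sub_cancel] at h
    rw [← h]
    push_cast
    field_simp
    ring
  have hvanish : ∑ n ∈ Finset.range k, (n.descFactorial k * x ^ n / n ! : ℝ) = 0 :=
    Finset.sum_eq_zero fun n hn => by
      simp [Nat.descFactorial_eq_zero_iff_lt.2 (Finset.mem_range.1 hn)]
  rw [← hasSum_nat_add_iff' k, hvanish, sub_zero, Real.exp_eq_exp_ℝ]
  simpa only [hshift] using (NormedSpace.expSeries_div_hasSum_exp x).mul_left (x ^ k)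

namespace RTree

theorem tsum_eq_tsum_node_ofFn (F : RTree → ℝ≥0∞) :
    ∑' u, F u = ∑' (n : ℕ) (g : Fin n → RTree), F (node (List.ofFn g)) := by
  let e : RTree ≃ Σ n, Fin n → RTree :=
    (⟨children, node, fun | node _ => rfl, fun _ => rfl⟩ : RTree ≃ List RTree).trans
      List.equivSigmaTuple
  rw [← e.symm.tsum_eq F, ENNReal.tsum_sigma']
  rfl

theorem ncount_node_ofFn {n k : ℕ} (g : Fin n → RTree) (s : Fin k → RTree) :
    ncount (node (List.ofFn g)) (node (List.ofFn s))
      = ∑ f : Fin k ↪ Fin n, ∏ i, ncount (g (f i)) (s i) := by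
  rw [ncount]
  refine Fintype.sum_equiv
    (Equiv.embeddingCongr (finCongr List.length_ofFn) (finCongr List.length_ofFn)) _ _ fun f => ?_
  exact Fintype.prod_equiv (finCongr List.length_ofFn) _ _ fun i => by simp [Fin.cast]

theorem ncount_node_nil (u : RTree) : ncount u (node []) = 1 := by
  cases u
  simp [ncount]

theorem prod_ncount_comp_embedding {n k : ℕ} (g : Fin n → RTree) (s : Fin k → RTree)
    (f : Fin k ↪ Fin n) :
    ∏ i, ncount (g (f i)) (s i)
      = ∏ j, ncount (g j) (Function.extend f s (fun _ => node []) j) :=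
  Fintype.prod_of_injective f f.injective _ _
    (fun j hj => by rw [Function.extend_apply' _ _ _ hj, ncount_node_nil])
    (fun i => by rw [f.injective.extend_apply])

noncomputable def poissonOne (n : ℕ) : ℝ≥0∞ := ENNReal.ofReal (Real.exp (-1) / n !)

theorem tsum_poissonOne_mul_descFactorial_mul_pow (k : ℕ) {x : ℝ} (hx : 0 ≤ x) :
    ∑' n, poissonOne n * n.descFactorial k * ENNReal.ofReal x ^ n
      = ENNReal.ofReal (x ^ k * Real.exp (x - 1)) := by
  have hterm : ∀ n : ℕ, poissonOne n * n.descFactorial k * ENNReal.ofReal x ^ n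
      = ENNReal.ofReal (Real.exp (-1) * (n.descFactorial k * x ^ n / n !)) := by
    intro n
    rw [poissonOne, ← ENNReal.ofReal_natCast, ← ENNReal.ofReal_pow hx,
      ← ENNReal.ofReal_mul (by positivity), ← ENNReal.ofReal_mul (by positivity)]
    congr 1
    ring
  have hsum := (hasSum_descFactorial_mul_pow_div_factorial k x).mul_left (Real.exp (-1))
  rw [tsum_congr hterm, ← ENNReal.ofReal_tsum_of_nonneg (fun n => by positivity) hsum.summable,
    hsum.tsum_eq, sub_eq_add_neg, Real.exp_add]
  ring_nf

theorem gwProb_node (ts : List RTree) :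
    gwProb (node ts) = Real.exp (-1) / ts.length ! * ∏ i : Fin ts.length, gwProb (ts.get i) := by
  rw [gwProb, List.attach_map_val (l := ts) (f := gwProb), ← List.ofFn_getElem_eq_map ts gwProb,
    List.prod_ofFn]
  rfl

theorem gwProb_nonneg : ∀ u : RTree, 0 ≤ gwProb u
  | node ts => by
    rw [gwProb_node]
    exact mul_nonneg (by positivity) (Finset.prod_nonneg fun i _ => gwProb_nonneg (ts.get i))
  termination_by u => sizeOf u
  decreasing_by
    simp only [node.sizeOf_spec]
    exact Nat.lt_add_left 1 (List.sizeOf_lt_of_mem (List.get_mem _ _))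

noncomputable def gwWeight (u : RTree) : ℝ≥0∞ := ENNReal.ofReal (gwProb u)

theorem gwWeight_node (ts : List RTree) :
    gwWeight (node ts) = poissonOne ts.length * ∏ i : Fin ts.length, gwWeight (ts.get i) := by
  rw [gwWeight, gwProb_node, ENNReal.ofReal_mul (by positivity),
    ENNReal.ofReal_prod_of_nonneg fun i _ => gwProb_nonneg _]
  rfl

theorem gwWeight_node_ofFn {n : ℕ} (g : Fin n → RTree) :
    gwWeight (node (List.ofFn g)) = poissonOne n * ∏ j, gwWeight (g j) := by
  rw [gwWeight_node]
  congr 1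
  · rw [List.length_ofFn]
  · exact Fintype.prod_equiv (finCongr List.length_ofFn) _ _ fun i => by simp [Fin.cast]

/-- The Galton–Watson weight of `u` restricted to trees of height `< h`. -/
noncomputable def gwWeightTrunc : ℕ → RTree → ℝ≥0∞
  | 0, _ => 0
  | h + 1, node ts => poissonOne ts.length * ∏ i : Fin ts.length, gwWeightTrunc h (ts.get i)

theorem gwWeightTrunc_succ_node_ofFn (h : ℕ) {n : ℕ} (g : Fin n → RTree) :
    gwWeightTrunc (h + 1) (node (List.ofFn g)) = poissonOne n * ∏ j, gwWeightTrunc h (g j) := by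
  rw [gwWeightTrunc]
  congr 1
  · rw [List.length_ofFn]
  · exact Fintype.prod_equiv (finCongr List.length_ofFn) _ _ fun i => by simp [Fin.cast]

theorem monotone_gwWeightTrunc (u : RTree) : Monotone fun h => gwWeightTrunc h u := by
  refine monotone_nat_of_le_succ fun h => ?_
  induction h generalizing u with
  | zero => rw [gwWeightTrunc]; positivity
  | succ h ih =>
    cases u with
    | node ts =>
      simp only [gwWeightTrunc]
      gcongr with i
      exact ih _

theorem gwWeightTrunc_of_sizeOf_le :
    ∀ (h : ℕ) (u : RTree), sizeOf u ≤ h → gwWeightTrunc h u = gwWeight u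
  | 0, node ts, hu => by simp at hu
  | h + 1, node ts, hu => by
    rw [gwWeightTrunc, gwWeight_node]
    congr 1
    refine Finset.prod_congr rfl fun i _ => gwWeightTrunc_of_sizeOf_le h _ ?_
    have := List.sizeOf_lt_of_mem (List.get_mem ts i)
    simp only [node.sizeOf_spec] at hu
    omega

theorem iSup_gwWeightTrunc (u : RTree) : ⨆ h, gwWeightTrunc h u = gwWeight u := by
  refine le_antisymm (iSup_le fun h => ?_)
    (le_iSup_of_le _ (gwWeightTrunc_of_sizeOf_le _ u le_rfl).ge)
  calc gwWeightTrunc h u ≤ gwWeightTrunc (max h (sizeOf u)) u :=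
        monotone_gwWeightTrunc u (le_max_left _ _)
    _ = gwWeight u := gwWeightTrunc_of_sizeOf_le _ _ (le_max_right _ _)

/-- The total mass of `gwWeightTrunc h` (`tsum_gwWeightTrunc`). -/
noncomputable def gwMassTrunc : ℕ → ℝ
  | 0 => 0
  | h + 1 => Real.exp (gwMassTrunc h - 1)

theorem gwMassTrunc_nonneg : ∀ h, 0 ≤ gwMassTrunc h
  | 0 => le_rfl
  | _ + 1 => (Real.exp_pos _).le

theorem gwMassTrunc_le_one : ∀ h, gwMassTrunc h ≤ 1
  | 0 => zero_le_one
  | h + 1 => Real.exp_le_one_iff.2 (by linarith [gwMassTrunc_le_one h])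

theorem monotone_gwMassTrunc : Monotone gwMassTrunc := by
  refine monotone_nat_of_le_succ fun h => ?_
  induction h with
  | zero => exact gwMassTrunc_nonneg 1
  | succ h ih => exact Real.exp_le_exp.2 (by linarith)

theorem tendsto_gwMassTrunc : Tendsto gwMassTrunc atTop (𝓝 1) := by
  obtain ⟨L, hL⟩ : ∃ L, Tendsto gwMassTrunc atTop (𝓝 L) :=
    ⟨_, tendsto_atTop_ciSup monotone_gwMassTrunc ⟨1, Set.forall_mem_range.2 gwMassTrunc_le_one⟩⟩
  have hfix : L = Real.exp (L - 1) :=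
    tendsto_nhds_unique (hL.comp (tendsto_add_atTop_nat 1))
      ((Real.continuous_exp.tendsto _).comp (hL.sub_const 1))
  -- `exp (L - 1) > L` unless `L = 1`
  have hL1 : L = 1 := by
    by_contra hne
    have := Real.add_one_lt_exp (sub_ne_zero.2 hne)
    linarith
  rwa [hL1] at hL

theorem tsum_gwWeightTrunc (h : ℕ) :
    ∑' u, gwWeightTrunc h u = ENNReal.ofReal (gwMassTrunc h) := by
  induction h with
  | zero => simp [gwWeightTrunc, gwMassTrunc]
  | succ h ih =>
    simp_rw [tsum_eq_tsum_node_ofFn (gwWeightTrunc (h + 1)), gwWeightTrunc_succ_node_ofFn,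
      ENNReal.tsum_mul_left, ← ENNReal.prod_tsum_eq_tsum_prod, ih, Finset.prod_const,
      Finset.card_univ, Fintype.card_fin]
    rw [gwMassTrunc]
    simpa using tsum_poissonOne_mul_descFactorial_mul_pow 0 (gwMassTrunc_nonneg h)

theorem tsum_gwWeight : ∑' u, gwWeight u = 1 := by
  simp_rw [← iSup_gwWeightTrunc]
  rw [ENNReal.tsum_iSup_eq_iSup_tsum monotone_gwWeightTrunc]
  simp_rw [tsum_gwWeightTrunc]
  refine iSup_eq_of_tendsto (fun a b hab => ENNReal.ofReal_le_ofReal (monotone_gwMassTrunc hab)) ?_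
  simpa using ENNReal.tendsto_ofReal tendsto_gwMassTrunc

noncomputable def expectedNCount (t : RTree) : ℝ≥0∞ := ∑' u, gwWeight u * ncount u t

theorem expectedNCount_node_nil : expectedNCount (node []) = 1 := by
  simp [expectedNCount, ncount_node_nil, tsum_gwWeight]

theorem gwWeight_mul_ncount_node_ofFn {n k : ℕ} (g : Fin n → RTree) (s : Fin k → RTree) :
    gwWeight (node (List.ofFn g)) * ncount (node (List.ofFn g)) (node (List.ofFn s))
      = poissonOne n * ∑ f : Fin k ↪ Fin n,
          ∏ j, gwWeight (g j) * ncount (g j) (Function.extend f s (fun _ => node []) j) := by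
  rw [gwWeight_node_ofFn, ncount_node_ofFn]
  simp_rw [prod_ncount_comp_embedding, Nat.cast_sum, Nat.cast_prod, Finset.prod_mul_distrib,
    Finset.mul_sum, mul_assoc]

theorem expectedNCount_node_ofFn {k : ℕ} (s : Fin k → RTree)
    (hs : ∀ i, expectedNCount (s i) = 1) : expectedNCount (node (List.ofFn s)) = 1 := by
  have hfactor {n : ℕ} (f : Fin k ↪ Fin n) (j : Fin n) :
      expectedNCount (Function.extend f s (fun _ => node []) j) = 1 := by
    by_cases hj : ∃ i, f i = j
    · obtain ⟨i, rfl⟩ := hj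
      rw [f.injective.extend_apply, hs]
    · rw [Function.extend_apply' _ _ _ hj, expectedNCount_node_nil]
  calc expectedNCount (node (List.ofFn s))
      = ∑' n, poissonOne n * ∑ f : Fin k ↪ Fin n,
          ∏ j, expectedNCount (Function.extend f s (fun _ => node []) j) := by
        rw [expectedNCount, tsum_eq_tsum_node_ofFn]
        refine tsum_congr fun n => ?_
        simp_rw [gwWeight_mul_ncount_node_ofFn, ENNReal.tsum_mul_left]
        rw [Summable.tsum_finsetSum fun _ _ => ENNReal.summable]
        congr 1
        refine Finset.sum_congr rfl fun f _ => (ENNReal.prod_tsum_eq_tsum_prod n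
          fun j u => gwWeight u * ncount u (Function.extend f s (fun _ => node []) j)).symm
    _ = ∑' n, poissonOne n * n.descFactorial k * ENNReal.ofReal 1 ^ n := by
        simp [hfactor, Fintype.card_embedding_eq]
    _ = 1 := by simpa using tsum_poissonOne_mul_descFactorial_mul_pow k zero_le_one

theorem expectedNCount_eq_one : ∀ t : RTree, expectedNCount t = 1
  | node ts => by
    rw [← List.ofFn_get ts]
    exact expectedNCount_node_ofFn _ fun i => expectedNCount_eq_one (ts.get i)
  termination_by t => sizeOf t
  decreasing_by
    simp only [node.sizeOf_spec]
    exact Nat.lt_add_left 1 (List.sizeOf_lt_of_mem (List.get_mem _ _))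

end RTree

/-- **Expected number of tree-maps into a Poisson(1) Galton–Watson tree.**
For every finite rooted tree `t`, the expected number of tree-maps from `t` into the
family tree `U` of a Poisson(1) Galton–Watson branching process equals `1`. -/
theorem expected_treemaps_gw_poisson_one (t : RTree) :
    ∑' u : RTree, RTree.gwProb u * (RTree.ncount u t : ℝ) = 1 := by
  have hterm (u : RTree) : RTree.gwProb u * (RTree.ncount u t : ℝ)
      = (RTree.gwWeight u * RTree.ncount u t).toReal := by
    rw [ENNReal.toReal_mul, RTree.gwWeight, ENNReal.toReal_ofReal (RTree.gwProb_nonneg u),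
      ENNReal.toReal_natCast]
  rw [tsum_congr hterm, ← ENNReal.tsum_toReal_eq fun u => ?_]
  · rw [← RTree.expectedNCount, RTree.expectedNCount_eq_one, ENNReal.toReal_one]
  · exact ENNReal.mul_ne_top ENNReal.ofReal_ne_top (ENNReal.natCast_ne_top _)
end

section
/- With $Q(\alpha) = D^{-1}\sum_x e^{2\pi i \alpha\cdot x}R^x$ the Fourier-transformed adjacency matrix of a connected, $D$-regular, aperiodic periodic graph $G$ with at least one self-edge at every vertex class reachable as described, there is a constant $K = K(G) > 0$ such that every eigenvalue $\lambda$ of $Q(\alpha)$ satisfies $|\lambda| \le 1 - K|\alpha|^2$, where $|\alpha| = \max_j |\alpha_j|$ for $\alpha \in T^d$ identified with $(-1/2,1/2]^d$. -/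
/-!
Let `u ≠ 0` satisfy `Q(α) u = λ u`; `λ` is real because `Q(α)` is Hermitian. Consider the Bloch
wave `f(x, i) = e^{2πi α·x} u i` on the periodic graph. Row and column sums `D` turn the
quadratic forms `∑_{edges a → b out of the cell 0} |f a ∓ f b|²` into `2 D (1 ∓ λ) ‖u‖²`.
The self-edges alone contribute `4 ‖u‖²` to the `+` form, so `1 + λ ≥ 2 / D`. By connectivity,
for every class `c` and direction `j` some path of length at most `N = N(G)` leads from `(0, c)`
to `(e_j, c)`; along it `f` changes by `(e^{2πi α_j} - 1) u c`, so by the triangle inequality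
`16 α_j² |u c|² ≤ |e^{2πi α_j} - 1|² |u c|² ≤ N² · 2 D (1 - λ) ‖u‖²`. Summing over `c` gives
`1 - λ ≥ 8 α_j² / (D k N²)`.
-/

open Complex Finset Matrix

lemma Finset.sum_comp_neg_of_neg_mem {G M : Type*} [InvolutiveNeg G] [AddCommMonoid M]
    {s : Finset G} (hs : ∀ x ∈ s, -x ∈ s) (f : G → M) : ∑ x ∈ s, f (-x) = ∑ x ∈ s, f x :=
  sum_nbij' Neg.neg Neg.neg hs hs (fun x _ => neg_neg x) (fun x _ => neg_neg x) fun _ _ => rfl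

open scoped ComplexOrder in
lemma Matrix.IsHermitian.im_eq_zero_of_mulVec_eq_smul {𝕜 ι : Type*} [RCLike 𝕜] [Fintype ι]
    {A : Matrix ι ι 𝕜} (hA : A.IsHermitian) {u : ι → 𝕜} (hu : u ≠ 0) {μ : 𝕜}
    (h : A *ᵥ u = μ • u) : RCLike.im μ = 0 := by
  have him := hA.im_star_dotProduct_mulVec_self u
  obtain ⟨hre, him'⟩ := RCLike.pos_iff.1 (dotProduct_star_self_pos_iff.2 hu)
  rw [h, dotProduct_smul, smul_eq_mul, RCLike.mul_im, him', mul_zero, zero_add] at him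
  exact (mul_eq_zero.1 him).resolve_right hre.ne'

lemma Complex.norm_sub_mul_sq_of_norm_eq_one {z : ℂ} (hz : ‖z‖ = 1) (a b : ℂ) :
    ‖a - z * b‖ ^ 2 = ‖a‖ ^ 2 + ‖b‖ ^ 2 - 2 * (z * (starRingEnd ℂ a * b)).re := by
  have hz' : normSq z = 1 := by rw [← Complex.sq_norm, hz, one_pow]
  rw [Complex.sq_norm, Complex.sq_norm, Complex.sq_norm, normSq_sub, normSq_mul, hz', one_mul,
    ← conj_re (a * _), map_mul, conj_conj, mul_left_comm]

lemma sum_sum_sum_mul_eq {G ι : Type*} [Fintype ι] {T : Finset G} {w : G → ι → ι → ℕ} {D : ℕ}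
    (hw : ∀ i, ∑ x ∈ T, ∑ j, w x i j = D) (g : ι → ℝ) :
    ∑ x ∈ T, ∑ i, ∑ j, (w x i j : ℝ) * g i = D * ∑ i, g i := by
  simp only [← sum_mul]
  rw [sum_comm, mul_sum]
  refine sum_congr rfl fun i _ => ?_
  rw [← sum_mul]
  exact_mod_cast congrArg (fun n : ℕ => (n : ℝ) * g i) (hw i)

lemma sum_norm_sq_pos {ι E : Type*} [Fintype ι] [NormedAddCommGroup E] {u : ι → E} (hu : u ≠ 0) :
    0 < ∑ i, ‖u i‖ ^ 2 := by
  obtain ⟨i, hi⟩ := Function.ne_iff.1 hu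
  exact sum_pos' (fun _ _ => by positivity) ⟨i, mem_univ i, pow_pos (norm_pos_iff.2 hi) 2⟩

theorem Relation.ReflTransGen.exists_forall_norm_sub_le {V S E : Type*}
    [SeminormedAddCommGroup E] {r : V → V → Prop} (f : S → V → E) (c : S → ℝ)
    (hstep : ∀ s a b, r a b → ‖f s b - f s a‖ ≤ c s) {p q : V}
    (h : Relation.ReflTransGen r p q) : ∃ n : ℕ, ∀ s, ‖f s q - f s p‖ ≤ n * c s := by
  induction h with
  | refl => exact ⟨0, by simp⟩
  | tail _ hbc ih =>
    obtain ⟨n, hn⟩ := ih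
    refine ⟨n + 1, fun s => ?_⟩
    calc _ ≤ _ := norm_sub_le_norm_sub_add_norm_sub _ _ _
      _ ≤ c s + n * c s := add_le_add (hstep s _ _ hbc) (hn s)
      _ = (n + 1 : ℕ) * c s := by push_cast; ring

namespace PeriodicGraph

variable {d : ℕ}

noncomputable def phase (α : Fin d → ℝ) (x : Fin d → ℤ) : ℂ :=
  exp (2 * Real.pi * I * ((∑ j, α j * (x j : ℝ) : ℝ) : ℂ))

section Phase

variable (α : Fin d → ℝ)

@[simp] lemma norm_phase (x : Fin d → ℤ) : ‖phase α x‖ = 1 := by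
  simp [phase, norm_exp]

@[simp] lemma phase_zero : phase α 0 = 1 := by simp [phase]

lemma phase_add (x y : Fin d → ℤ) : phase α (x + y) = phase α x * phase α y := by
  simp only [phase, ← exp_add, Pi.add_apply, Int.cast_add, mul_add, sum_add_distrib]
  push_cast; ring_nf

lemma conj_phase (x : Fin d → ℤ) : starRingEnd ℂ (phase α x) = phase α (-x) := by
  simp only [phase, ← exp_conj, map_mul, conj_I, conj_ofReal, map_ofNat, Pi.neg_apply,
    Int.cast_neg, mul_neg, sum_neg_distrib]
  push_cast; ring_nf

lemma sixteen_mul_sq_le_norm_exp_sub_one_sq {t : ℝ} (ht : |t| ≤ 1 / 2) :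
    16 * t ^ 2 ≤ ‖exp (I * ((2 * Real.pi * t : ℝ) : ℂ)) - 1‖ ^ 2 := by
  have hsin := Real.mul_abs_le_abs_sin (x := Real.pi * t) (by
    rw [abs_mul, abs_of_pos Real.pi_pos]; nlinarith [Real.pi_pos])
  rw [abs_mul, abs_of_pos Real.pi_pos, ← mul_assoc, div_mul_cancel₀ _ Real.pi_pos.ne'] at hsin
  rw [norm_exp_I_mul_ofReal_sub_one, norm_mul, Real.norm_eq_abs, Real.norm_eq_abs,
    show 2 * Real.pi * t / 2 = Real.pi * t by ring, abs_two]
  nlinarith [mul_le_mul hsin hsin (by positivity) (abs_nonneg _), sq_abs t]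

lemma sixteen_mul_sq_le_norm_phase_single_sub_one_sq (j : Fin d) (hα : |α j| ≤ 1 / 2) :
    16 * α j ^ 2 ≤ ‖phase α (Pi.single j 1) - 1‖ ^ 2 := by
  convert sixteen_mul_sq_le_norm_exp_sub_one_sq hα using 4
  simp [phase, Pi.single_apply]
  ring_nf

end Phase

section FourierAdj

variable {ι : Type*} (α : Fin d → ℝ) (R : (Fin d → ℤ) → Matrix ι ι ℕ) (T : Finset (Fin d → ℤ))

noncomputable def fourierAdj : Matrix ι ι ℂ := ∑ x ∈ T, phase α x • (R x).map (↑)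

variable {R T}

lemma finsum_eq_fourierAdj (hT : ∀ x, R x ≠ 0 → x ∈ T) :
    ∑ᶠ x : Fin d → ℤ, exp (2 * Real.pi * I * ((∑ j, α j * (x j : ℝ) : ℝ) : ℂ)) •
      (R x).map (fun n => (n : ℂ)) = fourierAdj α R T :=
  finsum_eq_sum_of_support_subset _ fun x hx => hT x fun h => hx (by simp [h])

lemma fourierAdj_isHermitian (hsym : ∀ x, R (-x) = (R x)ᵀ) (hT : ∀ x ∈ T, -x ∈ T) :
    (fourierAdj α R T).IsHermitian := by
  refine IsHermitian.ext fun i j => ?_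
  simp only [fourierAdj, Matrix.sum_apply, Matrix.smul_apply, map_apply, smul_eq_mul, star_sum,
    star_mul', RCLike.star_def, conj_phase, map_natCast]
  rw [← sum_comp_neg_of_neg_mem hT]
  simp [hsym, mul_comm]

lemma sum_sum_col_eq_sum_sum_row [Fintype ι] (hsym : ∀ x, R (-x) = (R x)ᵀ)
    (hT : ∀ x ∈ T, -x ∈ T) (j : ι) : ∑ x ∈ T, ∑ i, R x i j = ∑ x ∈ T, ∑ i, R x j i := by
  rw [← sum_comp_neg_of_neg_mem hT]
  simp [hsym]

end FourierAdj

section BlochForm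

variable {ι : Type*} [Fintype ι] (α : Fin d → ℝ) (R : (Fin d → ℤ) → Matrix ι ι ℕ)
  (T : Finset (Fin d → ℤ))

/-- For `ε = 1` this is the Dirichlet energy `∑ |f a - f b|²` of the Bloch wave
`f (x, i) = phase α x * u i` over the edges `a → b` leaving the cell `0`; for `ε = -1` it is
its signless analogue `∑ |f a + f b|²`. -/
noncomputable def blochForm (ε : ℂ) (u : ι → ℂ) : ℝ :=
  ∑ x ∈ T, ∑ i, ∑ j, (R x i j : ℝ) * ‖u i - ε * (phase α x * u j)‖ ^ 2

lemma blochForm_nonneg (ε : ℂ) (u : ι → ℂ) : 0 ≤ blochForm α R T ε u := by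
  unfold blochForm; positivity

variable {α R T}

lemma blochForm_eq {D : ℕ} (hrow : ∀ i, ∑ x ∈ T, ∑ j, R x i j = D)
    (hcol : ∀ j, ∑ x ∈ T, ∑ i, R x i j = D) {ε : ℂ} (hε : ‖ε‖ = 1) (u : ι → ℂ) :
    blochForm α R T ε u =
      2 * (D * ∑ i, ‖u i‖ ^ 2 - (ε * (star u ⬝ᵥ fourierAdj α R T *ᵥ u)).re) := by
  have hterm (x : Fin d → ℤ) (i j : ι) :
      (R x i j : ℝ) * ‖u i - ε * (phase α x * u j)‖ ^ 2 = R x i j * ‖u i‖ ^ 2 +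
        R x i j * ‖u j‖ ^ 2 - 2 * (R x i j * (ε * phase α x * (starRingEnd ℂ (u i) * u j)).re) := by
    rw [← mul_assoc, norm_sub_mul_sq_of_norm_eq_one (by simp [hε])]
    ring
  have hcol' : ∑ x ∈ T, ∑ i, ∑ j, (R x i j : ℝ) * ‖u j‖ ^ 2 = D * ∑ j, ‖u j‖ ^ 2 := by
    rw [sum_congr rfl fun x _ => sum_comm]
    exact sum_sum_sum_mul_eq (w := fun x i j => R x j i) hcol _
  have hcross : ∑ x ∈ T, ∑ i, ∑ j,
      (R x i j : ℝ) * (ε * phase α x * (starRingEnd ℂ (u i) * u j)).re =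
        (ε * (star u ⬝ᵥ fourierAdj α R T *ᵥ u)).re := by
    simp only [dotProduct, mulVec, fourierAdj, Matrix.sum_apply, Matrix.smul_apply, map_apply,
      smul_eq_mul, sum_mul, mul_sum, re_sum, ← re_ofReal_mul]
    rw [sum_comm]
    refine sum_congr rfl fun i _ => ?_
    rw [sum_comm]
    refine sum_congr rfl fun j _ => sum_congr rfl fun x _ => ?_
    simp only [ofReal_natCast, Pi.star_apply, RCLike.star_def]
    ring_nf
  rw [blochForm]
  simp only [hterm, sum_sub_distrib, sum_add_distrib, ← mul_sum, sum_sum_sum_mul_eq hrow, hcol',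
    hcross]
  ring

lemma blochForm_eq_of_mulVec_eq_smul {D : ℕ} (hrow : ∀ i, ∑ x ∈ T, ∑ j, R x i j = D)
    (hcol : ∀ j, ∑ x ∈ T, ∑ i, R x i j = D) {ε : ℂ} (hε : ‖ε‖ = 1) {u : ι → ℂ} {μ : ℂ}
    (hμ : fourierAdj α R T *ᵥ u = μ • u) :
    blochForm α R T ε u = 2 * (D - (ε * μ).re) * ∑ i, ‖u i‖ ^ 2 := by
  have hnorm : star u ⬝ᵥ u = ((∑ i, ‖u i‖ ^ 2 : ℝ) : ℂ) := by
    simp [dotProduct, Complex.mul_conj', mul_comm]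
  rw [blochForm_eq hrow hcol hε, hμ, dotProduct_smul, smul_eq_mul, hnorm, ← mul_assoc,
    re_mul_ofReal]
  ring

lemma norm_sub_sq_le_blochForm (hT : ∀ x, R x ≠ 0 → x ∈ T) (u : ι → ℂ)
    {a b : (Fin d → ℤ) × ι} (hab : 0 < R (b.1 - a.1) a.2 b.2) :
    ‖phase α b.1 * u b.2 - phase α a.1 * u a.2‖ ^ 2 ≤ blochForm α R T 1 u := by
  set x := b.1 - a.1
  set F : ι → ι → ℝ := fun i j => R x i j * ‖u i - 1 * (phase α x * u j)‖ ^ 2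
  calc ‖phase α b.1 * u b.2 - phase α a.1 * u a.2‖ ^ 2
      = ‖u a.2 - 1 * (phase α x * u b.2)‖ ^ 2 := by
        -- translating the edge by `-a.1` divides both endpoint values by `phase α a.1`
        rw [← add_sub_cancel a.1 b.1, phase_add, mul_assoc, ← mul_sub, norm_mul, norm_phase,
          one_mul, ← norm_neg, neg_sub, one_mul]
    _ ≤ F a.2 b.2 := le_mul_of_one_le_left (by positivity) (by exact_mod_cast hab)
    _ ≤ ∑ j, F a.2 j := single_le_sum (fun j _ => by positivity) (mem_univ _)
    _ ≤ ∑ i, ∑ j, F i j := single_le_sum (f := fun i => ∑ j, F i j)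
        (fun i _ => by positivity) (mem_univ _)
    _ ≤ blochForm α R T 1 u := single_le_sum (f := fun y => ∑ i, ∑ j,
          (R y i j : ℝ) * ‖u i - 1 * (phase α y * u j)‖ ^ 2)
        (fun y _ => by positivity) (hT x fun h => by simp [h] at hab)

lemma four_mul_sum_le_blochForm_neg_one (h0 : 0 ∈ T) (hself : ∀ i, 0 < R 0 i i) (u : ι → ℂ) :
    4 * ∑ i, ‖u i‖ ^ 2 ≤ blochForm α R T (-1) u := by
  set F : ι → ι → ℝ := fun i j => R 0 i j * ‖u i - -1 * (phase α 0 * u j)‖ ^ 2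
  calc 4 * ∑ i, ‖u i‖ ^ 2 = ∑ i, ‖u i - -1 * (phase α 0 * u i)‖ ^ 2 := by
        rw [mul_sum]
        refine sum_congr rfl fun i _ => ?_
        rw [phase_zero, show u i - -1 * (1 * u i) = 2 * u i by ring, norm_mul, mul_pow]
        norm_num
    _ ≤ ∑ i, F i i :=
        sum_le_sum fun i _ => le_mul_of_one_le_left (by positivity) (by exact_mod_cast hself i)
    _ ≤ ∑ i, ∑ j, F i j :=
        sum_le_sum fun i _ => single_le_sum (fun j _ => by positivity) (mem_univ i)
    _ ≤ blochForm α R T (-1) u := single_le_sum (f := fun y => ∑ i, ∑ j,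
          (R y i j : ℝ) * ‖u i - -1 * (phase α y * u j)‖ ^ 2)
        (fun y _ => by positivity) h0

lemma exists_norm_phase_single_sub_one_mul_le (hT : ∀ x, R x ≠ 0 → x ∈ T)
    (hconn : ∀ p q : (Fin d → ℤ) × ι,
      Relation.ReflTransGen (fun a b => 0 < R (b.1 - a.1) a.2 b.2) p q) :
    ∃ N : ℕ, ∀ (α : Fin d → ℝ) (u : ι → ℂ) (c : ι) (j : Fin d),
      ‖(phase α (Pi.single j 1) - 1) * u c‖ ≤ N * √(blochForm α R T 1 u) := by
  -- one path per `(c, j)`, chosen before `α` and `u`, so that its length is uniform in them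
  have hpath (c : ι) (j : Fin d) : ∃ n : ℕ, ∀ s : (Fin d → ℝ) × (ι → ℂ),
      ‖(phase s.1 (Pi.single j 1) - 1) * s.2 c‖ ≤ n * √(blochForm s.1 R T 1 s.2) := by
    obtain ⟨n, hn⟩ := (hconn (0, c) (Pi.single j 1, c)).exists_forall_norm_sub_le
      (fun (s : (Fin d → ℝ) × (ι → ℂ)) a => phase s.1 a.1 * s.2 a.2)
      (fun s => √(blochForm s.1 R T 1 s.2))
      fun s _ _ hab => by exact Real.le_sqrt_of_sq_le (norm_sub_sq_le_blochForm hT s.2 hab)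
    exact ⟨n, fun s => by simpa only [phase_zero, one_mul, sub_mul] using hn s⟩
  choose n hn using hpath
  obtain ⟨N, hN⟩ := (Set.finite_range fun p : ι × Fin d => n p.1 p.2).bddAbove
  refine ⟨N, fun α u c j => (hn c j (α, u)).trans ?_⟩
  gcongr
  exact_mod_cast hN ⟨(c, j), rfl⟩

lemma exists_sixteen_mul_sq_mul_sum_le_blochForm (hT : ∀ x, R x ≠ 0 → x ∈ T)
    (hconn : ∀ p q : (Fin d → ℤ) × ι,
      Relation.ReflTransGen (fun a b => 0 < R (b.1 - a.1) a.2 b.2) p q) :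
    ∃ N : ℕ, ∀ (α : Fin d → ℝ) (u : ι → ℂ) (j : Fin d), |α j| ≤ 1 / 2 →
      16 * α j ^ 2 * ∑ i, ‖u i‖ ^ 2 ≤ Fintype.card ι * N ^ 2 * blochForm α R T 1 u := by
  obtain ⟨N, hN⟩ := exists_norm_phase_single_sub_one_mul_le hT hconn
  refine ⟨N, fun α u j hα => ?_⟩
  calc 16 * α j ^ 2 * ∑ i, ‖u i‖ ^ 2 ≤ ∑ c, ‖(phase α (Pi.single j 1) - 1) * u c‖ ^ 2 := by
        rw [mul_sum]
        gcongr with c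
        rw [norm_mul, mul_pow]
        gcongr
        exact sixteen_mul_sq_le_norm_phase_single_sub_one_sq α j hα
    _ ≤ ∑ _c : ι, (N * √(blochForm α R T 1 u)) ^ 2 := by
        gcongr with c
        exact hN α u c j
    _ = Fintype.card ι * N ^ 2 * blochForm α R T 1 u := by
        rw [sum_const, card_univ, nsmul_eq_mul, mul_pow, Real.sq_sqrt (blochForm_nonneg α R T 1 u),
          mul_assoc]

variable {D : ℕ} {u : ι → ℂ} {μ : ℂ}

lemma re_le_of_mulVec_eq_smul (hrow : ∀ i, ∑ x ∈ T, ∑ j, R x i j = D)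
    (hcol : ∀ j, ∑ x ∈ T, ∑ i, R x i j = D) (hu : u ≠ 0)
    (hμ : fourierAdj α R T *ᵥ u = μ • u) : μ.re ≤ D := by
  have h := blochForm_nonneg α R T 1 u
  rw [blochForm_eq_of_mulVec_eq_smul hrow hcol (by simp) hμ, one_mul,
    mul_nonneg_iff_of_pos_right (sum_norm_sq_pos hu)] at h
  linarith

lemma two_le_add_re_of_mulVec_eq_smul (hrow : ∀ i, ∑ x ∈ T, ∑ j, R x i j = D)
    (hcol : ∀ j, ∑ x ∈ T, ∑ i, R x i j = D) (hT : ∀ x, R x ≠ 0 → x ∈ T) (hself : ∀ i, 0 < R 0 i i)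
    (hu : u ≠ 0) (hμ : fourierAdj α R T *ᵥ u = μ • u) : 2 ≤ D + μ.re := by
  obtain ⟨i, -⟩ := Function.ne_iff.1 hu
  have h := four_mul_sum_le_blochForm_neg_one (α := α)
    (hT 0 fun h => by simpa [h] using hself i) hself u
  rw [blochForm_eq_of_mulVec_eq_smul hrow hcol (by simp) hμ, neg_one_mul, neg_re,
    sub_neg_eq_add] at h
  have := le_of_mul_le_mul_right h (sum_norm_sq_pos hu)
  linarith

lemma eight_mul_sq_le_of_mulVec_eq_smul (hrow : ∀ i, ∑ x ∈ T, ∑ j, R x i j = D)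
    (hcol : ∀ j, ∑ x ∈ T, ∑ i, R x i j = D) {N : ℕ} {j : Fin d}
    (hN : 16 * α j ^ 2 * ∑ i, ‖u i‖ ^ 2 ≤ Fintype.card ι * N ^ 2 * blochForm α R T 1 u)
    (hu : u ≠ 0) (hμ : fourierAdj α R T *ᵥ u = μ • u) :
    8 * α j ^ 2 ≤ Fintype.card ι * N ^ 2 * (D - μ.re) := by
  rw [blochForm_eq_of_mulVec_eq_smul hrow hcol (by simp) hμ, one_mul, ← mul_assoc] at hN
  have := le_of_mul_le_mul_right hN (sum_norm_sq_pos hu)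
  linarith

end BlochForm

lemma abs_le_one_sub_of_bounds {D m r a : ℝ} (hD : 0 < D) (hm : 0 ≤ m) (ha : |a| ≤ 1 / 2)
    (hlow : 2 ≤ D + D * r) (hr : D * r ≤ D) (hup : 8 * a ^ 2 ≤ m * (D - D * r)) :
    |r| ≤ 1 - 8 / (D * (m + 1)) * a ^ 2 := by
  have hr1 : r ≤ 1 := le_of_mul_le_mul_left (by linarith) hD
  have ha2 : a ^ 2 ≤ 1 / 4 := by nlinarith [abs_nonneg a, sq_abs a]
  rw [div_mul_eq_mul_div, abs_le]
  constructor
  · rw [neg_sub, sub_le_iff_le_add, div_le_iff₀ (by positivity)]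
    nlinarith
  · rw [le_sub_comm, div_le_iff₀ (by positivity)]
    nlinarith

end PeriodicGraph

open PeriodicGraph

/-- **Quadratic eigenvalue bound for `Q(α)`.**
Let `G` be a connected `D`-regular periodic graph on `ℤᵈ × {1,…,k}` with at least one
self-edge at every vertex (so simple random walk is aperiodic), `R x i j` the number
of edges from `(0,i)` to `(x,j)`, and `Q(α) = D⁻¹ ∑_x e^{2πi α·x} R^x`.  There is a
constant `K = K(G) > 0` such that for every `α` with coordinates in `(-1/2, 1/2]`,
every eigenvalue `λ` of `Q(α)` satisfies `|λ| ≤ 1 - K |α|²`, where `|α| = max_j |α_j|`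
(equivalently, `|λ| ≤ 1 - K α_j²` for every `j`). -/
theorem eigenvalue_bound_of_Q (d k D : ℕ) (hD : 0 < D)
    (R : (Fin d → ℤ) → Matrix (Fin k) (Fin k) ℕ)
    (hfin : {x | R x ≠ 0}.Finite)
    (hsym : ∀ x, R (-x) = (R x).transpose)
    (hreg : ∀ i : Fin k, ∑ᶠ x : Fin d → ℤ, ∑ j : Fin k, R x i j = D)
    (hself : ∀ i : Fin k, 0 < R 0 i i)
    (hconn : ∀ p q : (Fin d → ℤ) × Fin k,
      Relation.ReflTransGen (fun a b => 0 < R (b.1 - a.1) a.2 b.2) p q)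
    (Q : (Fin d → ℝ) → Matrix (Fin k) (Fin k) ℂ)
    (hQ : ∀ α, Q α = (D : ℂ)⁻¹ • ∑ᶠ x : Fin d → ℤ,
      Complex.exp (2 * Real.pi * Complex.I * ((∑ j, α j * (x j : ℝ) : ℝ) : ℂ)) •
        (R x).map (fun n => (n : ℂ))) :
    ∃ K : ℝ, 0 < K ∧ ∀ (α : Fin d → ℝ), (∀ j, α j ∈ Set.Ioc (-(1/2) : ℝ) (1/2)) →
      ∀ (u : Fin k → ℂ) (lam : ℂ), u ≠ 0 → (Q α).mulVec u = lam • u →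
        ∀ j : Fin d, ‖lam‖ ≤ 1 - K * (α j) ^ 2 := by
  classical
  set T := hfin.toFinset
  have hT : ∀ x, R x ≠ 0 → x ∈ T := fun x hx => hfin.mem_toFinset.2 hx
  have hTneg : ∀ x ∈ T, -x ∈ T := fun x hx => by simpa [T, hsym] using hx
  have hrow : ∀ i, ∑ x ∈ T, ∑ j, R x i j = D := fun i => by
    rw [← hreg i, finsum_eq_sum_of_support_subset _ fun x hx => hT x fun h => hx (by simp [h])]
  have hcol : ∀ j, ∑ x ∈ T, ∑ i, R x i j = D := fun j =>
    (sum_sum_col_eq_sum_sum_row hsym hTneg j).trans (hrow j)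
  obtain ⟨N, hN⟩ := exists_sixteen_mul_sq_mul_sum_le_blochForm hT hconn
  refine ⟨8 / (D * (k * N ^ 2 + 1)), by positivity, fun α hα u lam hu hev j => ?_⟩
  have hμ : fourierAdj α R T *ᵥ u = ((D : ℂ) * lam) • u := by
    rw [hQ, finsum_eq_fourierAdj α hT, smul_mulVec] at hev
    rw [mul_smul, ← hev, smul_smul, mul_inv_cancel₀ (by exact_mod_cast hD.ne'), one_smul]
  have hre : ((D : ℂ) * lam).re = D * lam.re := by simp
  have him : lam.im = 0 := by
    simpa [hD.ne'] using (fourierAdj_isHermitian α hsym hTneg).im_eq_zero_of_mulVec_eq_smul hu hμ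
  have hαj : |α j| ≤ 1 / 2 := abs_le.2 ⟨(hα j).1.le, (hα j).2⟩
  rw [← abs_re_eq_norm.2 him]
  refine abs_le_one_sub_of_bounds (by exact_mod_cast hD) (by positivity) hαj ?_ ?_ ?_
  · exact hre ▸ two_le_add_re_of_mulVec_eq_smul hrow hcol hT hself hu hμ
  · exact hre ▸ re_le_of_mulVec_eq_smul hrow hcol hu hμ
  · simpa [hre] using eight_mul_sq_le_of_mulVec_eq_smul hrow hcol (hN α u j hαj) hu hμ
end
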